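/- arXiv:2110.08297 — 4 statements merged into one kernel-verified Lean document; each statement's English description precedes it below -/
import Mathlib

section
/- Let ⌊·⌋ : ℝ → ℤ denote the floor function. Then for all m ∈ [1,∞) it holds that max_{n ∈ ℕ₀} m^{n/2}/n! ≤ m^{⌊m^{1/2}⌋/2}/(⌊m^{1/2}⌋!) < exp(m^{1/2})/(⌊m^{1/2}⌋)^{1/2} ≤ exp(m^{1/2}). -/
/-!
Writing `s = √m`, the terms are `sⁿ / n!`, and consecutive terms have ratio `s / (n + 1)`, so
the sequence increases up to `n = ⌊s⌋` and decreases afterwards. For `k = ⌊s⌋ ≥ 1`, the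
inequality `x ≤ exp (x - 1)` at `x = s / k` gives `sᵏ ≤ kᵏ exp (s - k)`, and Stirling's lower
bound `k! ≥ √(2πk) (k / e)ᵏ` turns this into `sᵏ / k! ≤ exp s / √(2πk) < exp s / √k`.
-/

open Real Nat

section PowDivFactorial

variable {s : ℝ}

lemma pow_succ_div_factorial_succ (s : ℝ) (n : ℕ) :
    s ^ (n + 1) / (n + 1)! = s / (n + 1) * (s ^ n / n !) := by
  push_cast [Nat.factorial_succ, pow_succ]
  field_simp

lemma pow_div_factorial_le_of_le_of_cast_le (hs : 0 ≤ s) {n k : ℕ} (hnk : n ≤ k)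
    (hks : (k : ℝ) ≤ s) :
    s ^ n / n ! ≤ s ^ k / k ! := by
  induction k, hnk using Nat.le_induction with
  | base => rfl
  | succ k _ ih =>
    push_cast at hks
    rw [pow_succ_div_factorial_succ]
    exact (ih (by linarith)).trans <|
      le_mul_of_one_le_left (by positivity) ((one_le_div (by positivity)).2 hks)

lemma pow_div_factorial_le_of_ge_of_le_cast_add_one (hs : 0 ≤ s) {n k : ℕ} (hkn : k ≤ n)
    (hsk : s ≤ k + 1) : s ^ n / n ! ≤ s ^ k / k ! := by
  induction n, hkn using Nat.le_induction with
  | base => rfl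
  | succ n hkn ih =>
    have hsn : s ≤ n + 1 := hsk.trans (by exact_mod_cast Nat.succ_le_succ hkn)
    rw [pow_succ_div_factorial_succ]
    exact (mul_le_of_le_one_left (by positivity) ((div_le_one (by positivity)).2 hsn)).trans ih

lemma pow_div_factorial_le_pow_floor_div_factorial (hs : 0 ≤ s) (n : ℕ) :
    s ^ n / n ! ≤ s ^ ⌊s⌋₊ / ⌊s⌋₊ ! := by
  rcases le_total n ⌊s⌋₊ with hn | hn
  · exact pow_div_factorial_le_of_le_of_cast_le hs hn (Nat.floor_le hs)
  · exact pow_div_factorial_le_of_ge_of_le_cast_add_one hs hn (Nat.lt_floor_add_one s).le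

lemma pow_le_pow_mul_exp_sub (hs : 0 ≤ s) {k : ℕ} (hk : k ≠ 0) :
    s ^ k ≤ (k : ℝ) ^ k * exp (s - k) := by
  have hk' : (0 : ℝ) < k := by positivity
  have h := Real.add_one_le_exp (s / k - 1)
  rw [sub_add_cancel, div_le_iff₀ hk'] at h
  calc s ^ k ≤ (exp (s / k - 1) * k) ^ k := pow_le_pow_left₀ hs h k
    _ = (k : ℝ) ^ k * exp (s - k) := by
      rw [mul_pow, ← Real.exp_nat_mul, mul_sub, mul_div_cancel₀ _ hk'.ne', mul_one, mul_comm]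

lemma pow_mul_sqrt_lt_exp_mul_factorial (hs : 0 ≤ s) {k : ℕ} (hk : k ≠ 0) :
    s ^ k * √k < exp s * k ! := by
  have h2π : 1 < √(2 * π) := (Real.lt_sqrt zero_le_one).2 (by nlinarith [Real.pi_gt_three])
  have hpos : 0 < (k : ℝ) ^ k * exp (s - k) * √k := by positivity
  calc s ^ k * √k ≤ (k : ℝ) ^ k * exp (s - k) * √k := by
        gcongr
        exact pow_le_pow_mul_exp_sub hs hk
    _ < √(2 * π) * ((k : ℝ) ^ k * exp (s - k) * √k) := lt_mul_of_one_lt_left hpos h2π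
    _ = exp s * (√(2 * π * k) * (k / exp 1) ^ k) := by
      rw [Real.sqrt_mul (by positivity : (0 : ℝ) ≤ 2 * π) k, div_pow, Real.exp_one_pow,
        Real.exp_sub]
      field_simp
    _ ≤ exp s * k ! := by
      gcongr
      exact Stirling.le_factorial_stirling k

end PowDivFactorial

/-- The maximum over `n ∈ ℕ₀` of `m^(n/2)/n!` is attained at `n = ⌊√m⌋` and is bounded
by `exp(√m)/√⌊√m⌋ ≤ exp(√m)`. -/
theorem max_rpow_div_factorial (m : ℝ) (hm : 1 ≤ m) :
    (∀ n : ℕ, m ^ ((n : ℝ) / 2) / (n.factorial : ℝ)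
        ≤ m ^ ((⌊Real.sqrt m⌋₊ : ℝ) / 2) / ((⌊Real.sqrt m⌋₊).factorial : ℝ)) ∧
    m ^ ((⌊Real.sqrt m⌋₊ : ℝ) / 2) / ((⌊Real.sqrt m⌋₊).factorial : ℝ)
      < Real.exp (Real.sqrt m) / Real.sqrt (⌊Real.sqrt m⌋₊ : ℝ) ∧
    Real.exp (Real.sqrt m) / Real.sqrt (⌊Real.sqrt m⌋₊ : ℝ) ≤ Real.exp (Real.sqrt m) := by
  have hm0 : 0 ≤ m := zero_le_one.trans hm
  have hpow (n : ℕ) : m ^ ((n : ℝ) / 2) = √m ^ n := by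
    rw [Real.rpow_div_two_eq_sqrt _ hm0, Real.rpow_natCast]
  have hk : 1 ≤ ⌊√m⌋₊ := Nat.le_floor (by simpa using Real.sqrt_le_sqrt hm)
  have hsqrt_k : 1 ≤ √(⌊√m⌋₊ : ℝ) := Real.one_le_sqrt.2 (by exact_mod_cast hk)
  refine ⟨fun n ↦ ?_, ?_, div_le_self (exp_nonneg _) hsqrt_k⟩
  · rw [hpow, hpow]
    exact pow_div_factorial_le_pow_floor_div_factorial (Real.sqrt_nonneg m) n
  · rw [hpow, div_lt_div_iff₀ (by positivity) (by positivity)]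
    exact pow_mul_sqrt_lt_exp_mul_factorial (Real.sqrt_nonneg m) (by omega)
end

section
/- Let β ∈ (0,∞), (α_k)_{k≥0} ⊆ ℂ, and let (x_k)_{k≥0} ⊆ ℂ satisfy for all k ∈ ℕ₀ that x_k = α_k + Σ_{l=0}^{k−1} β^{k−l} (x_l + 1_ℕ(l)·x_{max{l−1,0}}). Then for all k ∈ ℕ₀ it holds that x_k = Σ_{l=0}^{k} [α_l − 1_ℕ(l)·β·α_{max{l−1,0}}] · ((β + √(β²+β))^{k+1−l} − (β − √(β²+β))^{k+1−l}) / (2√(β²+β)). -/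
/-!
Subtracting `β` times the recursion at `k` from the recursion at `k + 1` collapses the geometric
full history to a single term, so `x (k + 2) = y (k + 2) + 2β x (k + 1) + β x k` with
`y l = α l - 1_ℕ(l) β α (l - 1)`. The solution of such a forced two-step recurrence is the
convolution of the forcing `y` with the fundamental solution `φ` (`φ 0 = 0`, `φ 1 = 1`), and `φ` is
the Lucas-type sequence `(a ^ n - b ^ n) / (a - b)` built from the roots `a, b = β ± √(β² + β)` of
`t² = 2β t + β`.
-/

open Finset

theorem sub_mul_eq_of_eq_add_sum_pow_mul {R : Type*} [CommRing R] {β : R} {α z x : ℕ → R}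
    (hx : ∀ k, x k = α k + ∑ l ∈ range k, β ^ (k - l) * z l) (k : ℕ) :
    x (k + 1) - β * x k = α (k + 1) - β * α k + β * z k := by
  have hshift : ∑ l ∈ range k, β ^ (k + 1 - l) * z l = β * (x k - α k) := by
    rw [hx k, add_sub_cancel_left, mul_sum]
    refine sum_congr rfl fun l hl => ?_
    rw [Nat.sub_add_comm (mem_range.mp hl).le, pow_succ]
    ring
  rw [hx (k + 1), sum_range_succ, hshift, Nat.add_sub_cancel_left, pow_one]
  ring

theorem pow_sub_pow_div_sub_add_two {K : Type*} [Field K] {a b : K} (hab : a ≠ b) (n : ℕ) :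
    (a ^ (n + 2) - b ^ (n + 2)) / (a - b)
      = (a + b) * ((a ^ (n + 1) - b ^ (n + 1)) / (a - b))
        - a * b * ((a ^ n - b ^ n) / (a - b)) := by
  field_simp [sub_ne_zero.mpr hab]
  ring

section ForcedRecurrence

variable {R : Type*} [CommRing R] {p q : R} {φ : ℕ → R}

theorem sum_antidiagonal_mul_succ_add_two (h0 : φ 0 = 0) (h1 : φ 1 = 1)
    (hrec : ∀ n, φ (n + 2) = p * φ (n + 1) + q * φ n) (y : ℕ → R) (n : ℕ) :
    ∑ ij ∈ antidiagonal (n + 2), y ij.1 * φ (ij.2 + 1)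
      = y (n + 2) + p * ∑ ij ∈ antidiagonal (n + 1), y ij.1 * φ (ij.2 + 1)
        + q * ∑ ij ∈ antidiagonal n, y ij.1 * φ (ij.2 + 1) := by
  have hlag : ∑ ij ∈ antidiagonal (n + 1), y ij.1 * φ ij.2
      = ∑ ij ∈ antidiagonal n, y ij.1 * φ (ij.2 + 1) := by
    rw [Nat.sum_antidiagonal_succ', h0, mul_zero, zero_add]
  calc ∑ ij ∈ antidiagonal (n + 2), y ij.1 * φ (ij.2 + 1)
      = y (n + 2) + ∑ ij ∈ antidiagonal (n + 1), y ij.1 * φ (ij.2 + 2) := by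
        rw [Nat.sum_antidiagonal_succ', h1, mul_one]
    _ = y (n + 2) + (p * ∑ ij ∈ antidiagonal (n + 1), y ij.1 * φ (ij.2 + 1)
          + q * ∑ ij ∈ antidiagonal (n + 1), y ij.1 * φ ij.2) := by
        rw [mul_sum, mul_sum, ← sum_add_distrib]
        exact congrArg _ (sum_congr rfl fun ij _ => by rw [hrec]; ring)
    _ = _ := by rw [hlag, add_assoc]

theorem eq_sum_range_mul_of_two_step (h0 : φ 0 = 0) (h1 : φ 1 = 1)
    (hrec : ∀ n, φ (n + 2) = p * φ (n + 1) + q * φ n) {x y : ℕ → R} (hx0 : x 0 = y 0)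
    (hx1 : x 1 = y 1 + p * x 0) (hx : ∀ n, x (n + 2) = y (n + 2) + p * x (n + 1) + q * x n)
    (n : ℕ) : x n = ∑ l ∈ range (n + 1), y l * φ (n + 1 - l) := by
  have hconv : x n = ∑ ij ∈ antidiagonal n, y ij.1 * φ (ij.2 + 1) := by
    induction n using Nat.twoStepInduction with
    | zero => simp [hx0, h1]
    | one => simp [Nat.sum_antidiagonal_succ', hx1, hx0, h1, hrec 0, h0, mul_comm]
    | more n ih ih' => rw [hx, ih, ih', sum_antidiagonal_mul_succ_add_two h0 h1 hrec]
  rw [hconv, Nat.sum_antidiagonal_eq_sum_range_succ (fun i j => y i * φ (j + 1))]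
  exact sum_congr rfl fun l hl => by
    rw [Nat.sub_add_comm (Nat.lt_succ_iff.mp (mem_range.mp hl))]

end ForcedRecurrence

/-- Closed-form solution of the full-history recursion with geometric weights (γ = 0 case). -/
theorem full_history_recursion_closed_form_geometric (β : ℝ) (hβ : 0 < β) (α x : ℕ → ℂ)
    (hx : ∀ k : ℕ, x k = α k + ∑ l ∈ range k,
      (β : ℂ) ^ (k - l) * (x l + (if 1 ≤ l then x (l - 1) else 0))) :
    ∀ k : ℕ, x k = ∑ l ∈ range (k + 1),
      (α l - (if 1 ≤ l then (β : ℂ) * α (l - 1) else 0)) *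
        (((β + Real.sqrt (β ^ 2 + β) : ℝ) : ℂ) ^ (k + 1 - l)
          - ((β - Real.sqrt (β ^ 2 + β) : ℝ) : ℂ) ^ (k + 1 - l)) /
        (2 * (Real.sqrt (β ^ 2 + β) : ℂ)) := by
  set s : ℝ := Real.sqrt (β ^ 2 + β)
  have hs : (s : ℂ) ^ 2 = β ^ 2 + β := by exact_mod_cast Real.sq_sqrt (by positivity)
  have hs0 : (s : ℂ) ≠ 0 := by exact_mod_cast (Real.sqrt_pos.mpr (by positivity)).ne'
  set a : ℂ := ((β + s : ℝ) : ℂ)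
  set b : ℂ := ((β - s : ℝ) : ℂ)
  have hab : a - b = 2 * s := by push_cast [a, b]; ring
  have hsum : a + b = 2 * β := by push_cast [a, b]; ring
  have hprod : -(a * b) = β := by push_cast [a, b]; linear_combination hs
  have htwo := sub_mul_eq_of_eq_add_sum_pow_mul hx
  have hab0 : a - b ≠ 0 := hab ▸ mul_ne_zero two_ne_zero hs0
  intro k
  rw [← hab]
  simp only [mul_div_assoc]
  refine eq_sum_range_mul_of_two_step (p := 2 * (β : ℂ)) (q := (β : ℂ))
    (φ := fun n => (a ^ n - b ^ n) / (a - b))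
    (y := fun l => α l - if 1 ≤ l then (β : ℂ) * α (l - 1) else 0) ?_ ?_ (fun n => ?_) ?_ ?_ ?_ k
  · simp
  · simp [hab0]
  · rw [pow_sub_pow_div_sub_add_two (sub_ne_zero.mp hab0), hsum, ← hprod]; ring
  · simpa using hx 0
  · have h := htwo 0
    simp only [zero_add, le_refl, Nat.le_zero, one_ne_zero, if_false, if_true, add_zero] at h ⊢
    linear_combination h
  · intro n
    have h := htwo (n + 1)
    simp only [Nat.le_add_left, if_true, Nat.add_sub_cancel, Nat.reduceSubDiff] at h ⊢
    linear_combination h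
end

section
/- Let β ∈ (0,∞), (α_k)_{k≥0} ⊆ ℂ, and let (x_k)_{k≥0} ⊆ ℂ satisfy for all k ∈ ℕ₀ that x_k = α_k + Σ_{l=0}^{k−1} (k−l)·β^{k−l}·(x_l + 1_ℕ(l)·x_{max{l−1,0}}). Then for all k ∈ ℕ₀ it holds that x_k = Σ_{l=0}^{k} [α_l − 1_ℕ(l)·2β·α_{max{l−1,0}} + 1_{[2,∞)}(l)·β²·α_{max{l−2,0}}] · ((3β + √(5β²+4β))^{k+1−l} − (3β − √(5β²+4β))^{k+1−l}) / (2^{k+1−l} √(5β²+4β)). -/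
open Finset

private lemma sumA' (b : ℂ) (x : ℕ → ℂ) (m : ℕ) :
    ∑ l ∈ range (m + 1), ((m + 1 - l : ℕ) : ℂ) * b ^ (m + 1 - l) *
        (x l + (if 1 ≤ l then x (l - 1) else 0))
      = b * ∑ l ∈ range m, ((m - l : ℕ) : ℂ) * b ^ (m - l) *
          (x l + (if 1 ≤ l then x (l - 1) else 0))
        + ∑ l ∈ range (m + 1), b ^ (m + 1 - l) * (x l + (if 1 ≤ l then x (l - 1) else 0)) := by
  have h0 : b * ∑ l ∈ range m, ((m - l : ℕ) : ℂ) * b ^ (m - l) *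
        (x l + (if 1 ≤ l then x (l - 1) else 0))
      = ∑ l ∈ range (m + 1), b * (((m - l : ℕ) : ℂ) * b ^ (m - l) *
          (x l + (if 1 ≤ l then x (l - 1) else 0))) := by
    rw [Finset.sum_range_succ, Finset.mul_sum]
    simp [Nat.sub_self]
  rw [h0, ← Finset.sum_add_distrib]
  refine Finset.sum_congr rfl fun l hl => ?_
  have hl' : l < m + 1 := Finset.mem_range.mp hl
  have e : m + 1 - l = (m - l) + 1 := by omega
  rw [e]
  push_cast
  rw [pow_succ]
  ring

private lemma sumB' (b : ℂ) (x : ℕ → ℂ) (m : ℕ) :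
    ∑ l ∈ range (m + 2), b ^ (m + 2 - l) * (x l + (if 1 ≤ l then x (l - 1) else 0))
      = b * ∑ l ∈ range (m + 1), b ^ (m + 1 - l) * (x l + (if 1 ≤ l then x (l - 1) else 0))
        + b * (x (m + 1) + x m) := by
  rw [Finset.sum_range_succ, Finset.mul_sum]
  congr 1
  · refine Finset.sum_congr rfl fun l hl => ?_
    have hl' : l < m + 1 := Finset.mem_range.mp hl
    have e : m + 2 - l = (m + 1 - l) + 1 := by omega
    rw [e, pow_succ]
    ring
  · have e1 : m + 2 - (m + 1) = 1 := by omega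
    rw [e1, pow_one, if_pos (Nat.le_add_left 1 m)]
    rfl

/-- Closed-form solution of the full-history recursion with weights `(k-l)·β^(k-l)`
(γ = 1 case). -/
theorem full_history_recursion_closed_form_linear (β : ℝ) (hβ : 0 < β) (α x : ℕ → ℂ)
    (hx : ∀ k : ℕ, x k = α k + ∑ l ∈ range k,
      ((k - l : ℕ) : ℂ) * (β : ℂ) ^ (k - l) * (x l + (if 1 ≤ l then x (l - 1) else 0))) :
    ∀ k : ℕ, x k = ∑ l ∈ range (k + 1),
      (α l - (if 1 ≤ l then 2 * (β : ℂ) * α (l - 1) else 0)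
          + (if 2 ≤ l then (β : ℂ) ^ 2 * α (l - 2) else 0)) *
        (((3 * β + Real.sqrt (5 * β ^ 2 + 4 * β) : ℝ) : ℂ) ^ (k + 1 - l)
          - ((3 * β - Real.sqrt (5 * β ^ 2 + 4 * β) : ℝ) : ℂ) ^ (k + 1 - l)) /
        ((2 : ℂ) ^ (k + 1 - l) * (Real.sqrt (5 * β ^ 2 + 4 * β) : ℂ)) := by
  have harg : (0:ℝ) < 5 * β ^ 2 + 4 * β := by nlinarith [hβ, sq_nonneg β]
  set s : ℝ := Real.sqrt (5 * β ^ 2 + 4 * β) with hs_def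
  have hs2 : s ^ 2 = 5 * β ^ 2 + 4 * β := Real.sq_sqrt harg.le
  have hs0 : 0 < s := Real.sqrt_pos.mpr harg
  set b : ℂ := (β : ℂ) with hb_def
  set P : ℂ := ((3 * β + s : ℝ) : ℂ) with hP_def
  set Q : ℂ := ((3 * β - s : ℝ) : ℂ) with hQ_def
  have hsC : ((s : ℝ) : ℂ) ≠ 0 := by
    exact_mod_cast hs0.ne'
  have hs2' : ((s : ℝ) : ℂ) ^ 2 = 5 * b ^ 2 + 4 * b := by
    rw [hb_def]
    exact_mod_cast congrArg Complex.ofReal hs2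
  have hPQ : P - Q = 2 * (s : ℂ) := by
    rw [hP_def, hQ_def]
    push_cast
    ring
  have hP2 : P ^ 2 = 6 * b * P + (4 * b - 4 * b ^ 2) := by
    rw [hP_def, hb_def]
    push_cast
    push_cast at hs2'
    rw [hb_def] at hs2'
    linear_combination hs2'
  have hQ2 : Q ^ 2 = 6 * b * Q + (4 * b - 4 * b ^ 2) := by
    rw [hQ_def, hb_def]
    push_cast
    push_cast at hs2'
    rw [hb_def] at hs2'
    linear_combination hs2'
  set c : ℕ → ℂ := fun n => (P ^ n - Q ^ n) / ((2 : ℂ) ^ n * (s : ℂ)) with hc_def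
  set A : ℕ → ℂ := fun l => α l - (if 1 ≤ l then 2 * b * α (l - 1) else 0)
      + (if 2 ≤ l then b ^ 2 * α (l - 2) else 0) with hA_def
  have hC0 : c 0 = 0 := by simp [hc_def]
  have hC1 : c 1 = 1 := by
    simp only [hc_def, pow_one]
    rw [hPQ]
    exact div_self (mul_ne_zero two_ne_zero hsC)
  have hCrec : ∀ n, c (n + 2) = 3 * b * c (n + 1) + (b - b ^ 2) * c n := by
    intro n
    have hnum : P ^ (n + 2) - Q ^ (n + 2)
        = 6 * b * (P ^ (n + 1) - Q ^ (n + 1)) + (4 * b - 4 * b ^ 2) * (P ^ n - Q ^ n) := by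
      linear_combination P ^ n * hP2 - Q ^ n * hQ2
    simp only [hc_def]
    rw [hnum]
    field_simp
    ring
  have hC2 : c 2 = 3 * b := by
    have h := hCrec 0
    rw [hC1, hC0] at h
    simpa using h
  have hA0 : A 0 = α 0 := by simp [hA_def]
  have hA1 : A 1 = α 1 - 2 * b * α 0 := by simp [hA_def]
  have hA2 : ∀ k : ℕ, A (k + 2) = α (k + 2) - 2 * b * α (k + 1) + b ^ 2 * α k := by
    intro k
    simp only [hA_def]
    rw [if_pos (by omega : 1 ≤ k + 2), if_pos (by omega : 2 ≤ k + 2)]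
    rfl
  have hx0 : x 0 = α 0 := by simpa using hx 0
  have hx1 : x 1 = α 1 + b * α 0 := by
    have h := hx 1
    rw [Finset.sum_range_one] at h
    norm_num at h
    rw [hx0] at h
    exact h
  have hz : ∀ m : ℕ, x (m + 1) = α (m + 1) - b * α m + b * x m
      + ∑ l ∈ range (m + 1), b ^ (m + 1 - l) * (x l + (if 1 ≤ l then x (l - 1) else 0)) := by
    intro m
    have h1 := hx (m + 1)
    rw [sumA' b x m] at h1
    linear_combination h1 - b * hx m
  have hxrec : ∀ n : ℕ, x (n + 2) = 3 * b * x (n + 1) + (b - b ^ 2) * x n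
      + (α (n + 2) - 2 * b * α (n + 1) + b ^ 2 * α n) := by
    intro n
    have h1 : x (n + 2) = α (n + 2) - b * α (n + 1) + b * x (n + 1)
        + ∑ l ∈ range (n + 2), b ^ (n + 2 - l) * (x l + (if 1 ≤ l then x (l - 1) else 0)) :=
      hz (n + 1)
    have h2 := hz n
    have hB := sumB' b x n
    linear_combination h1 + hB - b * h2
  have hYrec : ∀ k : ℕ, ∑ l ∈ range (k + 3), A l * c (k + 3 - l)
      = 3 * b * (∑ l ∈ range (k + 2), A l * c (k + 2 - l))
        + (b - b ^ 2) * (∑ l ∈ range (k + 1), A l * c (k + 1 - l)) + A (k + 2) := by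
    intro k
    rw [Finset.sum_range_succ]
    rw [show k + 3 - (k + 2) = 1 from by omega, hC1, mul_one]
    rw [show (∑ l ∈ range (k + 2), A l * c (k + 3 - l))
        = ∑ l ∈ range (k + 2), (3 * b * (A l * c (k + 2 - l))
            + (b - b ^ 2) * (A l * c (k + 1 - l))) from
      Finset.sum_congr rfl fun l hl => by
        have hl' : l < k + 2 := Finset.mem_range.mp hl
        rw [show k + 3 - l = (k + 1 - l) + 2 from by omega,
          show k + 2 - l = (k + 1 - l) + 1 from by omega, hCrec (k + 1 - l)]
        ring]
    rw [Finset.sum_add_distrib, ← Finset.mul_sum, ← Finset.mul_sum]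
    rw [show (∑ l ∈ range (k + 2), A l * c (k + 1 - l))
        = ∑ l ∈ range (k + 1), A l * c (k + 1 - l) from by
      rw [Finset.sum_range_succ, show k + 1 - (k + 1) = 0 from by omega, hC0, mul_zero,
        add_zero]]
  have key2 : ∀ k : ℕ, x k = ∑ l ∈ range (k + 1), A l * c (k + 1 - l)
      ∧ x (k + 1) = ∑ l ∈ range (k + 1 + 1), A l * c (k + 1 + 1 - l) := by
    intro k
    induction k with
    | zero =>
      constructor
      · show x 0 = ∑ l ∈ range 1, A l * c (1 - l)
        rw [Finset.sum_range_one]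
        norm_num
        rw [hA0, hC1, mul_one]
        exact hx0
      · show x 1 = ∑ l ∈ range 2, A l * c (2 - l)
        rw [Finset.sum_range_succ, Finset.sum_range_one]
        norm_num
        rw [hA0, hA1, hC1, hC2]
        linear_combination hx1
    | succ n ihn =>
      refine ⟨ihn.2, ?_⟩
      show x (n + 2) = ∑ l ∈ range (n + 3), A l * c (n + 3 - l)
      rw [hxrec n, ihn.2, ihn.1, ← hA2 n]
      exact (hYrec n).symm
  intro k
  rw [(key2 k).1]
  refine Finset.sum_congr rfl fun l hl => ?_
  simp only [hA_def, hc_def]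
  rw [mul_div_assoc]
end

section
/- Let M, N ∈ ℕ, T ∈ (0,∞), τ ∈ [0,T], a, b ∈ [0,∞), p ∈ [1,∞), let f_n : [τ,T] → [0,∞], n ∈ ℕ₀, be measurable functions, assume sup_{s∈[τ,T]} f₀(s) < ∞, and assume for all n ∈ {1,...,N} and t ∈ [τ,T] that f_n(t) ≤ a/M^{n/2} + Σ_{i=0}^{n−1} (b/M^{(n−i−1)/2}) (∫_t^T (f_i(s))^p ds)^{1/p}. Then f_N(τ) ≤ [a + b(T−τ)^{1/p} sup_{s∈[τ,T]} f₀(s)] · (1 + b(T−τ)^{1/p})^{N−1} / ( M^{(N−⌊M^{p/2}⌋)/2} · (⌊M^{p/2}⌋!)^{1/p} ) ≤ [a + b(T−τ)^{1/p} sup_{s∈[τ,T]} f₀(s)] · (1 + b(T−τ)^{1/p})^{N−1} · exp(M^{p/2}/p) / M^{N/2}. -/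
open MeasureTheory ENNReal Finset
open scoped Nat

/-!
Write `S` for the supremum of `f 0` and `β = b (T - τ)^(1/p)`. The rescaled functions
`g n = M^(n/2) f n` satisfy `g n t ≤ a + b √M ∑_{i<n} ‖g i‖_{L^p[t,T]}`, with no other
dependence on `M`. By induction `g n t` is bounded by
`∑_k c_{k,n} (b √M)^k ((T - t)^k / k!)^(1/p)`, since by Minkowski the `L^p[t,T]`-norm of
`((T - ·)^k / k!)^(1/p)` is `((T - t)^(k+1) / (k+1)!)^(1/p)`. The coefficients satisfy
`c_{k+1,n} = ∑_{i<n} c_{k,i}`, so `σ_n(x) = ∑_k c_{k,n} x^k` obeys `σ_{n+1} = (1 + x) σ_n`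
for `n ≥ 1`, i.e. `σ_n(x) = (a + x S) (1 + x)^(n-1)`. At `t = τ` the `k`-th term is
`c_{k,n} β^k` times `M^(k/2) / (k!)^(1/p) = ((M^(p/2))^k / k!)^(1/p)`, which is largest at
`k = ⌊M^(p/2)⌋` and at most `exp (M^(p/2) / p)`.
-/

section Coefficients

variable (A S : ℝ≥0∞)

noncomputable def gronwallCoeff : ℕ → ℕ → ℝ≥0∞
  | 0, n => if n = 0 then S else A
  | k + 1, n => ∑ i ∈ range n, gronwallCoeff k i

-- Summing over all `k` spares us tracking that `gronwallCoeff A S k n = 0` for `n < k`.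
theorem tsum_gronwallCoeff_mul_pow (x : ℝ≥0∞) (n : ℕ) :
    ∑' k, gronwallCoeff A S k n * x ^ k
      = gronwallCoeff A S 0 n + x * ∑ i ∈ range n, ∑' k, gronwallCoeff A S k i * x ^ k := by
  rw [tsum_eq_zero_add' ENNReal.summable, pow_zero, mul_one, mul_sum]
  simp_rw [← ENNReal.tsum_mul_left]
  rw [← Summable.tsum_finsetSum fun _ _ => ENNReal.summable]
  refine congrArg _ (tsum_congr fun k => ?_)
  rw [gronwallCoeff.eq_2, sum_mul]
  exact sum_congr rfl fun i _ => by ring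

theorem tsum_gronwallCoeff_mul_pow_succ (x : ℝ≥0∞) (n : ℕ) :
    ∑' k, gronwallCoeff A S k (n + 1) * x ^ k = (A + x * S) * (1 + x) ^ n := by
  have hrec : ∀ m ≠ 0, ∑' k, gronwallCoeff A S k m * x ^ k
      = A + x * ∑ i ∈ range m, ∑' k, gronwallCoeff A S k i * x ^ k := fun m hm => by
    rw [tsum_gronwallCoeff_mul_pow, gronwallCoeff, if_neg hm]
  induction n with
  | zero =>
    rw [hrec 1 one_ne_zero, sum_range_one, tsum_gronwallCoeff_mul_pow, gronwallCoeff, if_pos rfl,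
      sum_range_zero, mul_zero, add_zero, pow_zero, mul_one]
  | succ n ih =>
    rw [hrec (n + 2) (by omega), sum_range_succ, mul_add, ← add_assoc, ← hrec (n + 1) (by omega),
      ih]
    ring

theorem sum_gronwallCoeff_mul_pow_mul_le {B x W : ℝ≥0∞} {y : ℕ → ℝ≥0∞}
    (hy : ∀ k, B ^ k * y k ≤ x ^ k * W) (s : Finset ℕ) (n : ℕ) :
    ∑ k ∈ s, gronwallCoeff A S k (n + 1) * B ^ k * y k ≤ (A + x * S) * (1 + x) ^ n * W :=
  calc ∑ k ∈ s, gronwallCoeff A S k (n + 1) * B ^ k * y k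
      ≤ ∑ k ∈ s, gronwallCoeff A S k (n + 1) * x ^ k * W := sum_le_sum fun k _ => by
        rw [mul_assoc, mul_assoc]
        exact mul_le_mul_right (hy k) _
    _ ≤ ∑' k, gronwallCoeff A S k (n + 1) * x ^ k * W := ENNReal.sum_le_tsum s
    _ = (A + x * S) * (1 + x) ^ n * W := by
        rw [ENNReal.tsum_mul_right, tsum_gronwallCoeff_mul_pow_succ]

end Coefficients

noncomputable def gronwallWeight (p T : ℝ) (k : ℕ) (t : ℝ) : ℝ≥0∞ :=
  ENNReal.ofReal ((T - t) ^ k / k !) ^ (1 / p)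

theorem lintegral_Icc_sub_pow_div_factorial {t T : ℝ} (htT : t ≤ T) (k : ℕ) :
    ∫⁻ s in Set.Icc t T, ENNReal.ofReal ((T - s) ^ k / k !)
      = ENNReal.ofReal ((T - t) ^ (k + 1) / (k + 1)!) := by
  rw [← ofReal_integral_eq_lintegral_ofReal (by fun_prop : Continuous _).integrableOn_Icc
    ((ae_restrict_mem measurableSet_Icc).mono fun s hs => by
      have : 0 ≤ T - s := sub_nonneg.2 hs.2
      positivity),
    integral_Icc_eq_integral_Ioc, ← intervalIntegral.integral_of_le htT,
    intervalIntegral.integral_div, intervalIntegral.integral_comp_sub_left (fun u => u ^ k),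
    integral_pow, Nat.factorial_succ]
  push_cast
  congr 1
  field_simp
  simp

theorem eLpNorm'_const_mul_gronwallWeight {p : ℝ} (hp : 0 < p) {t T : ℝ} (htT : t ≤ T)
    (d : ℝ≥0∞) (k : ℕ) :
    eLpNorm' (fun s => d * gronwallWeight p T k s) p (volume.restrict (Set.Icc t T))
      = d * gronwallWeight p T (k + 1) t := by
  have hpow : ∀ s, (d * gronwallWeight p T k s) ^ p = d ^ p * ENNReal.ofReal ((T - s) ^ k / k !) :=
    fun s => by
      rw [gronwallWeight, ENNReal.mul_rpow_of_nonneg _ _ hp.le, one_div,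
        ENNReal.rpow_inv_rpow hp.ne']
  simp only [eLpNorm', enorm_eq_self, hpow]
  rw [lintegral_const_mul _ (by fun_prop), lintegral_Icc_sub_pow_div_factorial htT,
    ENNReal.mul_rpow_of_nonneg _ _ (by positivity), ← ENNReal.rpow_mul, mul_one_div_cancel hp.ne',
    ENNReal.rpow_one, gronwallWeight]

theorem eLpNorm'_le_sum_mul_gronwallWeight_succ {p : ℝ} (hp : 1 ≤ p) {t T : ℝ} (htT : t ≤ T)
    {g : ℝ → ℝ≥0∞} {s : Finset ℕ} {d : ℕ → ℝ≥0∞}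
    (hg : ∀ u ∈ Set.Icc t T, g u ≤ ∑ k ∈ s, d k * gronwallWeight p T k u) :
    eLpNorm' g p (volume.restrict (Set.Icc t T)) ≤ ∑ k ∈ s, d k * gronwallWeight p T (k + 1) t := by
  have hp0 : 0 < p := zero_lt_one.trans_le hp
  calc eLpNorm' g p (volume.restrict (Set.Icc t T))
      ≤ eLpNorm' (∑ k ∈ s, fun u => d k * gronwallWeight p T k u) p
          (volume.restrict (Set.Icc t T)) := by
        refine eLpNorm'_mono_enorm_ae hp0.le (ae_restrict_of_forall_mem measurableSet_Icc ?_)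
        simpa only [enorm_eq_self, Finset.sum_apply] using hg
    _ ≤ ∑ k ∈ s, eLpNorm' (fun u => d k * gronwallWeight p T k u) p
          (volume.restrict (Set.Icc t T)) :=
        eLpNorm'_sum_le (fun k _ =>
          ((by unfold gronwallWeight; fun_prop : Measurable _).const_mul _).aestronglyMeasurable) hp
    _ = ∑ k ∈ s, d k * gronwallWeight p T (k + 1) t :=
        sum_congr rfl fun k _ => eLpNorm'_const_mul_gronwallWeight hp0 htT (d k) k

theorem le_sum_gronwallCoeff_mul_gronwallWeight {p : ℝ} (hp : 1 ≤ p) {τ T : ℝ}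
    {A B S : ℝ≥0∞} {N : ℕ} {g : ℕ → ℝ → ℝ≥0∞} (h0 : ∀ t ∈ Set.Icc τ T, g 0 t ≤ S)
    (hrec : ∀ n, 1 ≤ n → n ≤ N → ∀ t ∈ Set.Icc τ T,
      g n t ≤ A + B * ∑ i ∈ range n, eLpNorm' (g i) p (volume.restrict (Set.Icc t T)))
    {n : ℕ} (hn : n ≤ N) {t : ℝ} (ht : t ∈ Set.Icc τ T) :
    g n t ≤ ∑ k ∈ range (n + 1), gronwallCoeff A S k n * B ^ k * gronwallWeight p T k t := by
  induction n using Nat.strong_induction_on generalizing t with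
  | _ n ih =>
    have hweight0 : gronwallWeight p T 0 t = 1 := by simp [gronwallWeight]
    rcases Nat.eq_zero_or_pos n with rfl | hn0
    · simpa [gronwallCoeff, hweight0] using h0 t ht
    have hnorm : ∀ i ∈ range n, eLpNorm' (g i) p (volume.restrict (Set.Icc t T))
        ≤ ∑ k ∈ range n, gronwallCoeff A S k i * B ^ k * gronwallWeight p T (k + 1) t := by
      intro i hi
      have hi : i < n := mem_range.1 hi
      refine (eLpNorm'_le_sum_mul_gronwallWeight_succ hp ht.2 fun u hu =>
        ih i hi (by omega) ⟨ht.1.trans hu.1, hu.2⟩).trans ?_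
      exact sum_le_sum_of_subset (range_subset_range.2 hi)
    calc g n t
        ≤ A + B * ∑ i ∈ range n, ∑ k ∈ range n,
            gronwallCoeff A S k i * B ^ k * gronwallWeight p T (k + 1) t := by
          grw [hrec n hn0 hn t ht, sum_le_sum hnorm]
      _ = ∑ k ∈ range (n + 1), gronwallCoeff A S k n * B ^ k * gronwallWeight p T k t := by
          rw [sum_range_succ', sum_comm, mul_sum]
          simp only [gronwallCoeff, if_neg hn0.ne', hweight0, sum_mul, pow_succ]
          rw [add_comm, pow_zero, mul_one, mul_one]
          refine congrArg (· + A) (sum_congr rfl fun k _ => ?_)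
          rw [mul_sum]
          exact sum_congr rfl fun i _ => by ring

theorem pow_div_factorial_le_floor {x : ℝ} (hx : 0 ≤ x) (k : ℕ) :
    x ^ k / k ! ≤ x ^ ⌊x⌋₊ / (⌊x⌋₊)! := by
  rw [div_le_div_iff₀ (by positivity) (by positivity)]
  rcases le_total k ⌊x⌋₊ with hk | hk
  · obtain ⟨j, hj⟩ := Nat.exists_eq_add_of_le hk
    have hfact : ((k + j)! : ℝ) ≤ k ! * x ^ j := by
      have hK : ((k + j : ℕ) : ℝ) ≤ x := hj ▸ Nat.floor_le hx
      calc ((k + j)! : ℝ) = k ! * ((k + 1).ascFactorial j : ℕ) := by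
            rw [← Nat.factorial_mul_ascFactorial]; push_cast; ring
        _ ≤ k ! * ((k + j : ℕ) : ℝ) ^ j := by
            gcongr; exact_mod_cast Nat.ascFactorial_le_pow_add k j
        _ ≤ k ! * x ^ j := by gcongr
    rw [hj, pow_add]
    calc x ^ k * ((k + j)! : ℝ) ≤ x ^ k * (k ! * x ^ j) := by gcongr
      _ = x ^ k * x ^ j * k ! := by ring
  · obtain ⟨j, hj⟩ := Nat.exists_eq_add_of_le hk
    set K := ⌊x⌋₊
    have hfact : (K ! : ℝ) * x ^ j ≤ (K + j)! := by
      calc (K ! : ℝ) * x ^ j ≤ K ! * ((K : ℝ) + 1) ^ j := by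
            gcongr; exact (Nat.lt_floor_add_one x).le
        _ ≤ (K + j)! := by exact_mod_cast Nat.factorial_mul_pow_le_factorial
    rw [hj, pow_add]
    calc x ^ K * x ^ j * (K ! : ℝ) = x ^ K * (K ! * x ^ j) := by ring
      _ ≤ x ^ K * (K + j)! := by gcongr

theorem pow_div_factorial_rpow_le_exp {x p : ℝ} (hx : 0 ≤ x) (hp : 0 ≤ p) (k : ℕ) :
    (x ^ k / k !) ^ (1 / p) ≤ Real.exp (x / p) := by
  rw [div_eq_mul_one_div x, Real.exp_mul]
  exact Real.rpow_le_rpow (by positivity) (Real.pow_div_factorial_le_exp x hx k) (by positivity)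

theorem rpow_pow_one_div_rpow {y p : ℝ} (hy : 0 ≤ y) (hp : p ≠ 0) (k : ℕ) :
    ((y ^ p) ^ k) ^ (1 / p) = y ^ k := by
  rw [Real.rpow_pow_comm hy, one_div, Real.rpow_rpow_inv (by positivity) hp]

theorem ofReal_mul_pow_mul_gronwallWeight_le {b r p τ T : ℝ} (hb : 0 ≤ b) (hr : 0 ≤ r)
    (hp : 0 < p) (hτT : τ ≤ T) (k : ℕ) :
    ENNReal.ofReal (b * r) ^ k * gronwallWeight p T k τ
      ≤ ENNReal.ofReal (b * (T - τ) ^ (1 / p)) ^ k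
        * ENNReal.ofReal (((r ^ p) ^ ⌊r ^ p⌋₊ / (⌊r ^ p⌋₊)!) ^ (1 / p)) := by
  have hTτ : 0 ≤ T - τ := sub_nonneg.2 hτT
  rw [gronwallWeight, ENNReal.ofReal_rpow_of_nonneg (by positivity) (by positivity),
    ← ofReal_pow (by positivity), ← ofReal_pow (by positivity), ← ofReal_mul (by positivity),
    ← ofReal_mul (by positivity)]
  refine ofReal_le_ofReal ?_
  calc (b * r) ^ k * ((T - τ) ^ k / k !) ^ (1 / p)
      = (b * (T - τ) ^ (1 / p)) ^ k * ((r ^ p) ^ k / k !) ^ (1 / p) := by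
        rw [Real.div_rpow (by positivity) (by positivity), Real.div_rpow (by positivity)
          (by positivity), rpow_pow_one_div_rpow hr hp.ne', ← Real.rpow_pow_comm hTτ]
        ring
    _ ≤ _ := by gcongr _ * ?_ ^ _; exact pow_div_factorial_le_floor (by positivity) k

theorem full_history_gronwall {p τ T b r : ℝ} (hp : 1 ≤ p) (hτT : τ ≤ T) (hb : 0 ≤ b)
    (hr : 0 ≤ r) {A S : ℝ≥0∞} {n : ℕ} {g : ℕ → ℝ → ℝ≥0∞} (h0 : ∀ t ∈ Set.Icc τ T, g 0 t ≤ S)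
    (hrec : ∀ m, 1 ≤ m → m ≤ n + 1 → ∀ t ∈ Set.Icc τ T, g m t ≤ A
      + ENNReal.ofReal (b * r) * ∑ i ∈ range m, eLpNorm' (g i) p (volume.restrict (Set.Icc t T))) :
    g (n + 1) τ ≤ (A + ENNReal.ofReal (b * (T - τ) ^ (1 / p)) * S)
      * (1 + ENNReal.ofReal (b * (T - τ) ^ (1 / p))) ^ n
      * ENNReal.ofReal (((r ^ p) ^ ⌊r ^ p⌋₊ / (⌊r ^ p⌋₊)!) ^ (1 / p)) :=
  (le_sum_gronwallCoeff_mul_gronwallWeight hp h0 hrec le_rfl ⟨le_rfl, hτT⟩).trans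
    (sum_gronwallCoeff_mul_pow_mul_le _ _ (ofReal_mul_pow_mul_gronwallWeight_le hb hr
      (zero_lt_one.trans_le hp) hτT) _ n)

theorem eLpNorm'_const_mul {α : Type*} [MeasurableSpace α] {μ : Measure α} {p : ℝ} (hp : 0 < p)
    {c : ℝ≥0∞} (hc : c ≠ ⊤) (g : α → ℝ≥0∞) :
    eLpNorm' (fun x => c * g x) p μ = c * eLpNorm' g p μ := by
  simp only [eLpNorm', enorm_eq_self, ENNReal.mul_rpow_of_nonneg _ _ hp.le]
  rw [lintegral_const_mul' _ _ (rpow_ne_top_of_nonneg hp.le hc),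
    ENNReal.mul_rpow_of_nonneg _ _ (by positivity), ← ENNReal.rpow_mul, mul_one_div_cancel hp.ne',
    ENNReal.rpow_one]

theorem rpow_natCast_div_two {x : ℝ} (hx : 0 ≤ x) (k : ℕ) : x ^ ((k : ℝ) / 2) = √x ^ k := by
  rw [Real.rpow_div_two_eq_sqrt _ hx, Real.rpow_natCast]

theorem sqrt_pow_mul_le_of_full_history_bound {α : Type*} [MeasurableSpace α] {μ : Measure α}
    {M a b p : ℝ} (hM : 0 < M) (hp : 0 < p) {n : ℕ} {f : ℕ → α → ℝ≥0∞} {y : ℝ≥0∞}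
    (hy : y ≤ ENNReal.ofReal (a / M ^ ((n : ℝ) / 2))
      + ∑ i ∈ range n, ENNReal.ofReal (b / M ^ (((n : ℝ) - i - 1) / 2))
          * (∫⁻ s, f i s ^ p ∂μ) ^ (1 / p)) :
    ENNReal.ofReal (√M ^ n) * y ≤ ENNReal.ofReal a + ENNReal.ofReal (b * √M)
      * ∑ i ∈ range n, eLpNorm' (fun s => ENNReal.ofReal (√M ^ i) * f i s) p μ := by
  have hr : 0 < √M := Real.sqrt_pos.2 hM
  have hterm : ∀ i ∈ range n, ENNReal.ofReal (√M ^ n)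
      * (ENNReal.ofReal (b / M ^ (((n : ℝ) - i - 1) / 2)) * (∫⁻ s, f i s ^ p ∂μ) ^ (1 / p))
      = ENNReal.ofReal (b * √M) * eLpNorm' (fun s => ENNReal.ofReal (√M ^ i) * f i s) p μ := by
    intro i hi
    obtain ⟨j, rfl⟩ := Nat.exists_eq_add_of_lt (mem_range.1 hi)
    have hexp : ((i + j + 1 : ℕ) : ℝ) - i - 1 = j := by push_cast; ring
    have hpow : √M ^ (i + j + 1) * (b / √M ^ j) = b * √M * √M ^ i := by
      field_simp
      ring
    rw [eLpNorm'_const_mul hp ofReal_ne_top, hexp, rpow_natCast_div_two hM.le, ← mul_assoc,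
      ← ofReal_mul (by positivity), hpow, ofReal_mul' (by positivity), mul_assoc]
    simp only [eLpNorm', enorm_eq_self]
  calc ENNReal.ofReal (√M ^ n) * y
      ≤ ENNReal.ofReal (√M ^ n) * (ENNReal.ofReal (a / M ^ ((n : ℝ) / 2))
          + ∑ i ∈ range n, ENNReal.ofReal (b / M ^ (((n : ℝ) - i - 1) / 2))
            * (∫⁻ s, f i s ^ p ∂μ) ^ (1 / p)) := by gcongr
    _ = _ := by
      rw [mul_add, mul_sum, sum_congr rfl hterm, ← mul_sum, ← ofReal_mul (by positivity),
        rpow_natCast_div_two hM.le, mul_div_cancel₀ _ (by positivity)]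

theorem rpow_sub_div_two_mul_factorial_rpow {M p : ℝ} (hM : 0 < M) (hp : p ≠ 0) (N K : ℕ) :
    M ^ (((N : ℝ) - K) / 2) * (K ! : ℝ) ^ (1 / p) = √M ^ N / ((√M ^ p) ^ K / K !) ^ (1 / p) := by
  rw [sub_div, Real.rpow_sub hM, rpow_natCast_div_two hM.le, rpow_natCast_div_two hM.le,
    Real.div_rpow (by positivity) (by positivity), rpow_pow_one_div_rpow (Real.sqrt_nonneg M) hp]
  field_simp

theorem mlp_full_history_gronwall_general (M N : ℕ) (hM : 1 ≤ M) (hN : 1 ≤ N)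
    (T τ : ℝ) (hτ : τ ∈ Set.Icc (0:ℝ) T)
    (a b : ℝ) (hb : 0 ≤ b) (p : ℝ) (hp : 1 ≤ p)
    (f : ℕ → ℝ → ℝ≥0∞)
    (hrec : ∀ n, 1 ≤ n → n ≤ N → ∀ t ∈ Set.Icc τ T,
      f n t ≤ ENNReal.ofReal (a / (M : ℝ) ^ ((n : ℝ) / 2))
        + ∑ i ∈ range n, ENNReal.ofReal (b / (M : ℝ) ^ (((n : ℝ) - i - 1) / 2))
            * (∫⁻ s in Set.Icc t T, (f i s) ^ p) ^ (1 / p)) :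
    f N τ ≤ (ENNReal.ofReal a
        + ENNReal.ofReal (b * (T - τ) ^ (1 / p)) * ⨆ s ∈ Set.Icc τ T, f 0 s)
        * ENNReal.ofReal ((1 + b * (T - τ) ^ (1 / p)) ^ (N - 1)
          / ((M : ℝ) ^ (((N : ℝ) - (⌊(M : ℝ) ^ (p / 2)⌋₊ : ℝ)) / 2)
            * ((⌊(M : ℝ) ^ (p / 2)⌋₊).factorial : ℝ) ^ (1 / p))) ∧
    (ENNReal.ofReal a
        + ENNReal.ofReal (b * (T - τ) ^ (1 / p)) * ⨆ s ∈ Set.Icc τ T, f 0 s)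
        * ENNReal.ofReal ((1 + b * (T - τ) ^ (1 / p)) ^ (N - 1)
          / ((M : ℝ) ^ (((N : ℝ) - (⌊(M : ℝ) ^ (p / 2)⌋₊ : ℝ)) / 2)
            * ((⌊(M : ℝ) ^ (p / 2)⌋₊).factorial : ℝ) ^ (1 / p)))
      ≤ (ENNReal.ofReal a
        + ENNReal.ofReal (b * (T - τ) ^ (1 / p)) * ⨆ s ∈ Set.Icc τ T, f 0 s)
        * ENNReal.ofReal ((1 + b * (T - τ) ^ (1 / p)) ^ (N - 1)
          * Real.exp ((M : ℝ) ^ (p / 2) / p) / (M : ℝ) ^ ((N : ℝ) / 2)) := by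
  have hM0 : (0 : ℝ) < M := Nat.cast_pos.2 hM
  have hr : 0 < √(M : ℝ) := Real.sqrt_pos.2 hM0
  have hβ : 0 ≤ b * (T - τ) ^ (1 / p) := by
    have := sub_nonneg.2 hτ.2
    positivity
  obtain ⟨n, rfl⟩ : ∃ n, N = n + 1 := ⟨N - 1, by omega⟩
  have hscaled := full_history_gronwall hp hτ.2 hb hr.le (S := ⨆ s ∈ Set.Icc τ T, f 0 s)
    (g := fun m t => ENNReal.ofReal (√(M : ℝ) ^ m) * f m t)
    (fun t ht => by simpa using le_biSup (f 0) ht)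
    (fun m hm hmN t ht => sqrt_pow_mul_le_of_full_history_bound hM0 (by positivity)
      (hrec m hm hmN t ht))
  rw [Nat.add_sub_cancel, rpow_sub_div_two_mul_factorial_rpow hM0 (by positivity),
    div_div_eq_mul_div, Real.rpow_div_two_eq_sqrt p hM0.le, rpow_natCast_div_two hM0.le]
  refine ⟨?_, ?_⟩
  · rw [ofReal_div_of_pos (by positivity), ← mul_div_assoc,
      ENNReal.le_div_iff_mul_le (Or.inl (by positivity)) (Or.inl ofReal_ne_top), mul_comm]
    refine hscaled.trans_eq ?_
    rw [mul_assoc, ← ofReal_one, ← ofReal_add zero_le_one hβ, ← ofReal_pow (by positivity),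
      ← ofReal_mul (by positivity)]
  · gcongr
    exact pow_div_factorial_rpow_le_exp (by positivity) (by positivity) _

/-- Gronwall-type estimate for full-history recursive inequalities (MLP error recursion). -/
theorem mlp_full_history_gronwall (M N : ℕ) (hM : 1 ≤ M) (hN : 1 ≤ N)
    (T τ : ℝ) (hT : 0 < T) (hτ : τ ∈ Set.Icc (0:ℝ) T)
    (a b : ℝ) (ha : 0 ≤ a) (hb : 0 ≤ b) (p : ℝ) (hp : 1 ≤ p)
    (f : ℕ → ℝ → ℝ≥0∞) (hf : ∀ n, Measurable (f n))
    (hsup : (⨆ s ∈ Set.Icc τ T, f 0 s) < ⊤)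
    (hrec : ∀ n, 1 ≤ n → n ≤ N → ∀ t ∈ Set.Icc τ T,
      f n t ≤ ENNReal.ofReal (a / (M : ℝ) ^ ((n : ℝ) / 2))
        + ∑ i ∈ range n, ENNReal.ofReal (b / (M : ℝ) ^ (((n : ℝ) - i - 1) / 2))
            * (∫⁻ s in Set.Icc t T, (f i s) ^ p) ^ (1 / p)) :
    f N τ ≤ (ENNReal.ofReal a
        + ENNReal.ofReal (b * (T - τ) ^ (1 / p)) * ⨆ s ∈ Set.Icc τ T, f 0 s)
        * ENNReal.ofReal ((1 + b * (T - τ) ^ (1 / p)) ^ (N - 1)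
          / ((M : ℝ) ^ (((N : ℝ) - (⌊(M : ℝ) ^ (p / 2)⌋₊ : ℝ)) / 2)
            * ((⌊(M : ℝ) ^ (p / 2)⌋₊).factorial : ℝ) ^ (1 / p))) ∧
    (ENNReal.ofReal a
        + ENNReal.ofReal (b * (T - τ) ^ (1 / p)) * ⨆ s ∈ Set.Icc τ T, f 0 s)
        * ENNReal.ofReal ((1 + b * (T - τ) ^ (1 / p)) ^ (N - 1)
          / ((M : ℝ) ^ (((N : ℝ) - (⌊(M : ℝ) ^ (p / 2)⌋₊ : ℝ)) / 2)
            * ((⌊(M : ℝ) ^ (p / 2)⌋₊).factorial : ℝ) ^ (1 / p)))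
      ≤ (ENNReal.ofReal a
        + ENNReal.ofReal (b * (T - τ) ^ (1 / p)) * ⨆ s ∈ Set.Icc τ T, f 0 s)
        * ENNReal.ofReal ((1 + b * (T - τ) ^ (1 / p)) ^ (N - 1)
          * Real.exp ((M : ℝ) ^ (p / 2) / p) / (M : ℝ) ^ ((N : ℝ) / 2)) :=
  mlp_full_history_gronwall_general M N hM hN T τ hτ a b hb p hp f hrec
end
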